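/- For independent pairs (X, X') and (Y, Y') of i.i.d. real-valued integrable random variables with distributions F and G respectively, the energy distance E(X,Y) = 2·E|X − Y| − E|X − X'| − E|Y − Y'| equals zero if and only if F = G. -/

import Mathlib

/-!
Writing `|x - y| = λ [x, y) + λ [y, x)` and applying Tonelli, for independent `X ∼ F`, `Y ∼ G`
one gets `E|X - Y| = ∫ (F(t) (1 - G(t)) + G(t) (1 - F(t))) dt`, the integrand being the
probability that `t` separates `X` and `Y`. Combining the three such integrals, the energy
distance is `2 ∫ (F(t) - G(t))² dt`, which vanishes iff the distribution functions agree almost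
everywhere, hence everywhere by right continuity.
-/

open MeasureTheory ProbabilityTheory Set
open scoped Topology

lemma ENNReal.ofReal_abs_sub (x y : ℝ) :
    ENNReal.ofReal |x - y| = ENNReal.ofReal (y - x) + ENNReal.ofReal (x - y) := by
  rcases le_total x y with h | h
  · rw [abs_sub_comm, abs_of_nonneg (sub_nonneg.2 h), ENNReal.ofReal_of_nonpos (sub_nonpos.2 h),
      add_zero]
  · rw [abs_of_nonneg (sub_nonneg.2 h), ENNReal.ofReal_of_nonpos (sub_nonpos.2 h), zero_add]

theorem MeasureTheory.lintegral_ofReal_sub_eq_lintegral_measure {α : Type*} [MeasurableSpace α]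
    (ν : Measure α) [SFinite ν] {U V : α → ℝ} (hU : Measurable U) (hV : Measurable V) :
    ∫⁻ a, ENNReal.ofReal (V a - U a) ∂ν = ∫⁻ t, ν (U ⁻¹' Iic t ∩ V ⁻¹' Ioi t) := by
  have hS : MeasurableSet {p : α × ℝ | U p.1 ≤ p.2 ∧ p.2 < V p.1} :=
    (measurableSet_le (hU.comp measurable_fst) measurable_snd).inter
      (measurableSet_lt measurable_snd (hV.comp measurable_fst))
  calc ∫⁻ a, ENNReal.ofReal (V a - U a) ∂ν
      = ν.prod volume {p : α × ℝ | U p.1 ≤ p.2 ∧ p.2 < V p.1} := by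
        simp_rw [Measure.prod_apply hS, ← Real.volume_Ico]
        rfl
    _ = ∫⁻ t, ν (U ⁻¹' Iic t ∩ V ⁻¹' Ioi t) := Measure.prod_apply_symm hS

theorem eq_of_ae_eq_of_continuousWithinAt_Ici {X Y : Type*} [TopologicalSpace X] [LinearOrder X]
    [OrderTopology X] [DenselyOrdered X] [NoMaxOrder X] [MeasurableSpace X] [TopologicalSpace Y]
    [T2Space Y] {μ : Measure X} [μ.IsOpenPosMeasure] {f g : X → Y} (hfg : f =ᵐ[μ] g)
    (hf : ∀ x, ContinuousWithinAt f (Ici x) x) (hg : ∀ x, ContinuousWithinAt g (Ici x) x) :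
    f = g := by
  funext x
  set D := Ioi x ∩ {y | f y = g y}
  have hD : D ⊆ Ici x := inter_subset_left.trans Ioi_subset_Ici_self
  have hxD : x ∈ closure D :=
    closure_minimal ((μ.dense_of_ae hfg).open_subset_closure_inter isOpen_Ioi) isClosed_closure
      (closure_Ioi x ▸ self_mem_Ici)
  have := mem_closure_iff_nhdsWithin_neBot.1 hxD
  have hfg' : g =ᶠ[𝓝[D] x] f := eventually_nhdsWithin_of_forall fun y hy => hy.2.symm
  exact tendsto_nhds_unique ((hf x).mono hD).tendsto (((hg x).mono hD).tendsto.congr' hfg')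

lemma MeasureTheory.Measure.eq_of_cdf_ae_eq (F G : Measure ℝ) [IsProbabilityMeasure F]
    [IsProbabilityMeasure G] (h : cdf F =ᵐ[volume] cdf G) : F = G :=
  Measure.eq_of_cdf F G <| StieltjesFunction.ext <| congrFun <|
    eq_of_ae_eq_of_continuousWithinAt_Ici h (cdf F).right_continuous (cdf G).right_continuous

lemma ofReal_one_sub_cdf (F : Measure ℝ) [IsProbabilityMeasure F] (t : ℝ) :
    ENNReal.ofReal (1 - cdf F t) = F (Ioi t) := by
  rw [← compl_Iic, prob_compl_eq_one_sub measurableSet_Iic, ← ofReal_cdf,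
    ENNReal.ofReal_sub _ (cdf_nonneg F t), ENNReal.ofReal_one]

noncomputable def cdfSeparation (F G : Measure ℝ) (t : ℝ) : ℝ :=
  cdf F t * (1 - cdf G t) + cdf G t * (1 - cdf F t)

lemma cdf_mul_one_sub_cdf_nonneg (F G : Measure ℝ) (t : ℝ) : 0 ≤ cdf F t * (1 - cdf G t) :=
  mul_nonneg (cdf_nonneg F t) (sub_nonneg.2 (cdf_le_one G t))

lemma cdfSeparation_nonneg (F G : Measure ℝ) (t : ℝ) : 0 ≤ cdfSeparation F G t :=
  add_nonneg (cdf_mul_one_sub_cdf_nonneg F G t) (cdf_mul_one_sub_cdf_nonneg G F t)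

lemma measurable_cdfSeparation (F G : Measure ℝ) : Measurable (cdfSeparation F G) :=
  ((monotone_cdf F).measurable.mul (measurable_const.sub (monotone_cdf G).measurable)).add
    ((monotone_cdf G).measurable.mul (measurable_const.sub (monotone_cdf F).measurable))

lemma ofReal_cdfSeparation (F G : Measure ℝ) [IsProbabilityMeasure F] [IsProbabilityMeasure G]
    (t : ℝ) :
    ENNReal.ofReal (cdfSeparation F G t) = F (Iic t) * G (Ioi t) + F (Ioi t) * G (Iic t) := by
  rw [cdfSeparation,
    ENNReal.ofReal_add (cdf_mul_one_sub_cdf_nonneg F G t) (cdf_mul_one_sub_cdf_nonneg G F t),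
    ENNReal.ofReal_mul (cdf_nonneg F t), ENNReal.ofReal_mul (cdf_nonneg G t), ofReal_cdf,
    ofReal_cdf, ofReal_one_sub_cdf, ofReal_one_sub_cdf, mul_comm (G (Iic t))]

lemma lintegral_abs_sub_prod_eq_lintegral_cdfSeparation (F G : Measure ℝ) [IsProbabilityMeasure F]
    [IsProbabilityMeasure G] :
    ∫⁻ p, ENNReal.ofReal |p.1 - p.2| ∂F.prod G = ∫⁻ t, ENNReal.ofReal (cdfSeparation F G t) := by
  have hmeas : Measurable fun t => F (Iic t) * G (Ioi t) :=
    (Monotone.measurable fun _ _ h => measure_mono (Iic_subset_Iic.2 h)).mul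
      (Antitone.measurable fun _ _ h => measure_mono (Ioi_subset_Ioi h))
  simp_rw [ENNReal.ofReal_abs_sub, ofReal_cdfSeparation]
  rw [lintegral_add_left (by fun_prop),
    lintegral_ofReal_sub_eq_lintegral_measure (F.prod G) measurable_fst measurable_snd,
    lintegral_ofReal_sub_eq_lintegral_measure (F.prod G) measurable_snd measurable_fst,
    lintegral_add_left hmeas]
  congr 1 <;> congr 1 with t
  · rw [← Set.prod_eq, Measure.prod_prod]
  · rw [inter_comm, ← Set.prod_eq, Measure.prod_prod]

section IndepFun

variable {Ω : Type*} [MeasurableSpace Ω] {μ : Measure Ω} [IsProbabilityMeasure μ] {X Y : Ω → ℝ}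
  {F G : Measure ℝ}

lemma lintegral_abs_sub_eq_lintegral_cdfSeparation (hX : Measurable X) (hY : Measurable Y)
    (hXF : μ.map X = F) (hYG : μ.map Y = G) (hXY : IndepFun X Y μ) :
    ∫⁻ ω, ENNReal.ofReal |X ω - Y ω| ∂μ = ∫⁻ t, ENNReal.ofReal (cdfSeparation F G t) := by
  subst hXF hYG
  have := Measure.isProbabilityMeasure_map (μ := μ) hX.aemeasurable
  have := Measure.isProbabilityMeasure_map (μ := μ) hY.aemeasurable
  rw [← lintegral_abs_sub_prod_eq_lintegral_cdfSeparation,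
    ← hXY.map_prod_eq_prod_map_map hX.aemeasurable hY.aemeasurable,
    lintegral_map (by fun_prop) (hX.prodMk hY)]

lemma integral_abs_sub_eq_integral_cdfSeparation (hX : Measurable X) (hY : Measurable Y)
    (hXF : μ.map X = F) (hYG : μ.map Y = G) (hXY : IndepFun X Y μ) :
    ∫ ω, |X ω - Y ω| ∂μ = ∫ t, cdfSeparation F G t := by
  rw [integral_eq_lintegral_of_nonneg_ae (ae_of_all _ fun _ => abs_nonneg _)
      (by fun_prop),
    integral_eq_lintegral_of_nonneg_ae (ae_of_all _ (cdfSeparation_nonneg F G))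
      (measurable_cdfSeparation F G).aestronglyMeasurable,
    lintegral_abs_sub_eq_lintegral_cdfSeparation hX hY hXF hYG hXY]

lemma integrable_cdfSeparation (hX : Measurable X) (hY : Measurable Y)
    (hXF : μ.map X = F) (hYG : μ.map Y = G) (hXY : IndepFun X Y μ)
    (h : Integrable (fun ω => |X ω - Y ω|) μ) : Integrable (cdfSeparation F G) := by
  refine ⟨(measurable_cdfSeparation F G).aestronglyMeasurable, ?_⟩
  rw [hasFiniteIntegral_iff_ofReal (ae_of_all _ (cdfSeparation_nonneg F G)),
    ← lintegral_abs_sub_eq_lintegral_cdfSeparation hX hY hXF hYG hXY]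
  exact (hasFiniteIntegral_iff_ofReal (ae_of_all _ fun _ => abs_nonneg _)).1 h.2

end IndepFun

lemma two_mul_cdfSeparation_sub (F G : Measure ℝ) (t : ℝ) :
    2 * cdfSeparation F G t - cdfSeparation F F t - cdfSeparation G G t
      = 2 * (cdf F t - cdf G t) ^ 2 := by
  unfold cdfSeparation
  ring

lemma integrable_sq_cdf_sub {F G : Measure ℝ} (hFG : Integrable (cdfSeparation F G))
    (hFF : Integrable (cdfSeparation F F)) (hGG : Integrable (cdfSeparation G G)) :
    Integrable fun t => (cdf F t - cdf G t) ^ 2 := by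
  refine ((((hFG.const_mul 2).sub hFF).sub hGG).div_const 2).congr (ae_of_all _ fun t => ?_)
  simp only [Pi.sub_apply]
  rw [two_mul_cdfSeparation_sub]
  ring

lemma two_mul_integral_cdfSeparation_sub {F G : Measure ℝ} (hFG : Integrable (cdfSeparation F G))
    (hFF : Integrable (cdfSeparation F F)) (hGG : Integrable (cdfSeparation G G)) :
    2 * (∫ t, cdfSeparation F G t) - (∫ t, cdfSeparation F F t) - (∫ t, cdfSeparation G G t)
      = 2 * ∫ t, (cdf F t - cdf G t) ^ 2 := by
  rw [← integral_const_mul, ← integral_sub (hFG.const_mul 2) hFF,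
    ← integral_sub (by exact (hFG.const_mul 2).sub hFF) hGG, ← integral_const_mul]
  simp_rw [two_mul_cdfSeparation_sub]

lemma integral_sq_cdf_sub_eq_zero_iff {F G : Measure ℝ} [IsProbabilityMeasure F]
    [IsProbabilityMeasure G] (h : Integrable fun t => (cdf F t - cdf G t) ^ 2) :
    ∫ t, (cdf F t - cdf G t) ^ 2 = 0 ↔ F = G := by
  rw [integral_eq_zero_iff_of_nonneg (fun t => sq_nonneg _) h]
  constructor
  · intro h0
    refine Measure.eq_of_cdf_ae_eq F G ?_
    filter_upwards [h0] with t ht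
    simpa [sub_eq_zero] using ht
  · rintro rfl
    exact ae_of_all _ fun _ => by simp

/-- For independent pairs `(X, X')` and `(Y, Y')` of i.i.d. integrable
real random variables with distributions `F` and `G`, the energy distance
`2 E|X − Y| − E|X − X'| − E|Y − Y'|` is zero if and only if `F = G`. -/
theorem energy_distance_eq_zero_iff
    {Ω : Type*} [MeasurableSpace Ω] (μ : Measure Ω) [IsProbabilityMeasure μ]
    (X X' Y Y' : Ω → ℝ) (F G : Measure ℝ)
    (hX : Measurable X) (hX' : Measurable X') (hY : Measurable Y) (hY' : Measurable Y')
    (hXF : μ.map X = F) (hX'F : μ.map X' = F) (hYG : μ.map Y = G) (hY'G : μ.map Y' = G)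
    (hindep : iIndepFun ![X, X', Y, Y'] μ)
    (hiX : Integrable X μ) (hiX' : Integrable X' μ)
    (hiY : Integrable Y μ) (hiY' : Integrable Y' μ) :
    2 * (∫ ω, |X ω - Y ω| ∂μ)
        - (∫ ω, |X ω - X' ω| ∂μ) - (∫ ω, |Y ω - Y' ω| ∂μ) = 0 ↔ F = G := by
  have : IsProbabilityMeasure F := hXF ▸ Measure.isProbabilityMeasure_map hX.aemeasurable
  have : IsProbabilityMeasure G := hYG ▸ Measure.isProbabilityMeasure_map hY.aemeasurable
  have hXY : IndepFun X Y μ := by simpa using hindep.indepFun (show (0 : Fin 4) ≠ 2 by decide)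
  have hXX' : IndepFun X X' μ := by simpa using hindep.indepFun (show (0 : Fin 4) ≠ 1 by decide)
  have hYY' : IndepFun Y Y' μ := by simpa using hindep.indepFun (show (2 : Fin 4) ≠ 3 by decide)
  have hFG := integrable_cdfSeparation hX hY hXF hYG hXY (hiX.sub hiY).abs
  have hFF := integrable_cdfSeparation hX hX' hXF hX'F hXX' (hiX.sub hiX').abs
  have hGG := integrable_cdfSeparation hY hY' hYG hY'G hYY' (hiY.sub hiY').abs
  rw [integral_abs_sub_eq_integral_cdfSeparation hX hY hXF hYG hXY,
    integral_abs_sub_eq_integral_cdfSeparation hX hX' hXF hX'F hXX',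
    integral_abs_sub_eq_integral_cdfSeparation hY hY' hYG hY'G hYY',
    two_mul_integral_cdfSeparation_sub hFG hFF hGG, mul_eq_zero, or_iff_right two_ne_zero,
    integral_sq_cdf_sub_eq_zero_iff (integrable_sq_cdf_sub hFG hFF hGG)]
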